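/- arXiv:1707.09730 — 2 statements merged into one kernel-verified Lean document; each statement's English description precedes it below -/
import Mathlib

section
/- There is an associative superalgebra homomorphism π from U_q(osp(1|2n), Θ₁) to the deformed Clifford algebra Cl_q(n) given by: e_i ↦ ψ_i ψ_{i+1}†, f_i ↦ ψ_{i+1} ψ_i†, k_i ↦ v_i v_{i+1}^{-1} for 1 ≤ i ≤ n-1, and e_n ↦ √(-1)(q^{1/2} - q^{-1/2})^{-1} ψ_n, f_n ↦ ψ_n†, k_n ↦ √(-1) q^{1/2} v_n; that is, the images of the generators satisfy all the defining relations of U_q(osp(1|2n), Θ₁). -/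
/-- The defining relations of the deformed Clifford algebra `Cl_q(n)`:
an associative algebra `A` over a field `K` with elements `ψ i`, `ψd i` (for `ψ_i†`),
`v i`, `vinv i` (for `v_i^{±1}`), `i < n`, satisfying the defining relations. -/
structure CliffordRel (K : Type*) (A : Type*) [Field K] [Ring A] [Algebra K A]
    (q : K) (n : ℕ) (ψ ψd v vinv : ℕ → A) : Prop where
  v_comm : ∀ i j, i < n → j < n → v i * v j = v j * v i
  v_vinv : ∀ i, i < n → v i * vinv i = 1
  vinv_v : ∀ i, i < n → vinv i * v i = 1
  v_ψ : ∀ i j, i < n → j < n → v i * ψ j = (if i = j then q else 1) • (ψ j * v i)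
  v_ψd : ∀ i j, i < n → j < n → v i * ψd j = (if i = j then q⁻¹ else 1) • (ψd j * v i)
  ψ_ψ : ∀ i j, i < n → j < n → ψ i * ψ j + ψ j * ψ i = 0
  ψd_ψd : ∀ i j, i < n → j < n → ψd i * ψd j + ψd j * ψd i = 0
  ψ_ψd : ∀ i j, i < n → j < n → i ≠ j → ψ i * ψd j + ψd j * ψ i = 0
  rel_q : ∀ i, i < n → ψ i * ψd i + q • (ψd i * ψ i) = vinv i
  rel_qinv : ∀ i, i < n → ψ i * ψd i + q⁻¹ • (ψd i * ψ i) = v i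

/-- The `d_i`-rescaled Cartan integers of `osp(1|2n)` with respect to `Θ₁` (0-indexed rows
and columns `0,…,n-1`, the last row/column corresponding to the odd simple root):
`d_i a_{ij}` where `d = (1,…,1,1/2)`, `a_{ii} = 2`, `a_{i,i±1} = -1` for `i < n`,
`a_{n,n-1} = -2`, `a_{nn} = 2`. -/
def ospExp (n : ℕ) (i j : ℕ) : ℤ :=
  if i = j then (if i + 1 = n then 1 else 2)
  else if i + 1 = j ∨ j + 1 = i then -1 else 0

/-!
The images of `e_i, f_i` for `i < n - 1` are products of two of the odd generators `ψ_a, ψ_b†`,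
those of `e_n, f_n` multiples of a single one. Distinct generators anticommute, except `ψ_i`
with `ψ_i†`, so images whose index sets are disjoint commute: this gives the off-diagonal
`e f`-relations and the Serre relations between distant nodes. Each image squares to zero
(as `ψ_i² = ψ_i†² = 0`) and `e_i e_j e_i = f_i f_j f_i = 0` for adjacent `i, j`, so every term
of the remaining Serre relations vanishes. The `k`-relations are a weight count, `v_i` rescaling
`ψ_j` by `q ^ δ_ij`, and the diagonal `e f`-relations follow from
`(q - q⁻¹) ψ_i† ψ_i = v_i⁻¹ - v_i` and `(q - q⁻¹) ψ_i ψ_i† = q v_i - q⁻¹ v_i⁻¹`.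
-/

section AntiCommute

variable {A : Type*} [Ring A] {a b c x : A}

def AntiCommute (a b : A) : Prop := a * b = -(b * a)

namespace AntiCommute

theorem of_add_eq_zero (h : a * b + b * a = 0) : AntiCommute a b :=
  eq_neg_of_add_eq_zero_left h

theorem symm (h : AntiCommute a b) : AntiCommute b a := by
  rw [AntiCommute, h, neg_neg]

theorem commute_mul_left (hac : AntiCommute a c) (hbc : AntiCommute b c) :
    Commute (a * b) c := by
  rw [Commute, SemiconjBy, mul_assoc, hbc, mul_neg, ← mul_assoc, hac, neg_mul, neg_neg,
    mul_assoc]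

theorem commute_mul_right (hab : AntiCommute a b) (hac : AntiCommute a c) :
    Commute a (b * c) :=
  (hab.symm.commute_mul_left hac.symm).symm

theorem commute_mul_mul {d : A} (hac : AntiCommute a c) (had : AntiCommute a d)
    (hbc : AntiCommute b c) (hbd : AntiCommute b d) : Commute (a * b) (c * d) :=
  (hac.commute_mul_left hbc).mul_right (had.commute_mul_left hbd)

theorem smul_right {K : Type*} [CommRing K] [Algebra K A] (h : AntiCommute a b) (t : K) :
    AntiCommute a (t • b) := by
  rw [AntiCommute, mul_smul_comm, smul_mul_assoc, h, smul_neg]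

theorem mul_mul_self_left (hab : AntiCommute a b) (ha : a * a = 0) : a * b * a = 0 := by
  rw [mul_assoc, hab.symm, mul_neg, ← mul_assoc, ha, zero_mul, neg_zero]

theorem mul_mul_self_right (hab : AntiCommute a b) (hb : b * b = 0) : b * a * b = 0 := by
  rw [hab.symm, neg_mul, mul_assoc, hb, mul_zero, neg_zero]

theorem mul_mul_mul_eq_zero_left (hab : AntiCommute a b) (ha : a * a = 0)
    (hx : Commute a x ∨ AntiCommute a x) : a * b * x * (a * b) = 0 := by
  have hassoc : a * b * x * (a * b) = a * b * (x * a) * b := by noncomm_ring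
  have haba : a * b * (a * x) * b = 0 := by
    rw [← mul_assoc, hab.mul_mul_self_left ha, zero_mul, zero_mul]
  rcases hx with hx | hx
  · rw [hassoc, ← hx.eq, haba]
  · rw [hassoc, hx.symm, mul_neg, neg_mul, haba, neg_zero]

theorem mul_mul_mul_eq_zero_right (hab : AntiCommute a b) (hb : b * b = 0)
    (hx : Commute b x ∨ AntiCommute b x) : a * b * x * (a * b) = 0 := by
  have hassoc : a * b * x * (a * b) = a * (b * x) * (a * b) := by noncomm_ring
  have hbab : a * (x * b) * (a * b) = 0 := by
    rw [mul_assoc, mul_assoc, ← mul_assoc b, hab.mul_mul_self_right hb, mul_zero, mul_zero]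
  rcases hx with hx | hx
  · rw [hassoc, hx.eq, hbab]
  · rw [hassoc, hx, mul_neg, neg_mul, hbab, neg_zero]

theorem mul_self_eq_zero (hab : AntiCommute a b) (ha : a * a = 0) : a * b * (a * b) = 0 := by
  simpa using hab.mul_mul_mul_eq_zero_left ha (.inl (Commute.one_right a))

end AntiCommute

end AntiCommute

section QCommute

variable {K A : Type*} [Field K] [Ring A] [Algebra K A] {q : K} {m m' : ℤ} {u u' w x y : A}

def QCommute (q : K) (m : ℤ) (u x : A) : Prop := u * x = q ^ m • (x * u)

namespace QCommute

theorem mul_right (hq : q ≠ 0) (hx : QCommute q m u x) (hy : QCommute q m' u y) :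
    QCommute q (m + m') u (x * y) := by
  rw [QCommute, ← mul_assoc, hx, smul_mul_assoc, mul_assoc, hy, mul_smul_comm, smul_smul,
    zpow_add₀ hq, mul_assoc]

theorem mul_left (hq : q ≠ 0) (hu : QCommute q m u x) (hu' : QCommute q m' u' x) :
    QCommute q (m + m') (u * u') x := by
  rw [QCommute, mul_assoc, hu', mul_smul_comm, ← mul_assoc, hu, smul_mul_assoc, smul_smul,
    zpow_add₀ hq, mul_comm (q ^ m), mul_assoc]

theorem smul_left (h : QCommute q m u x) (t : K) : QCommute q m (t • u) x := by
  rw [QCommute, smul_mul_assoc, h, mul_smul_comm, smul_comm]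

theorem smul_right (h : QCommute q m u x) (t : K) : QCommute q m u (t • x) := by
  rw [QCommute, mul_smul_comm, h, smul_mul_assoc, smul_comm]

theorem inv_left (hq : q ≠ 0) (huw : u * w = 1) (hwu : w * u = 1) (h : QCommute q m u x) :
    QCommute q (-m) w x := by
  have hxu : x * u = q ^ (-m) • (u * x) := by
    rw [h, smul_smul, zpow_neg, inv_mul_cancel₀ (zpow_ne_zero m hq), one_smul]
  calc w * x = w * (x * u) * w := by rw [mul_assoc, mul_assoc, huw, mul_one]
    _ = q ^ (-m) • (x * w) := by
      rw [hxu, mul_smul_comm, smul_mul_assoc, ← mul_assoc w u, hwu, one_mul]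

end QCommute

end QCommute

section Field

variable {K : Type*} [Field K] {q : K}

theorem sub_inv_ne_zero_of_sq_ne_one (hq0 : q ≠ 0) (hq1 : q ^ 2 ≠ 1) : q - q⁻¹ ≠ 0 := by
  intro hq
  apply hq1
  field_simp at hq
  linear_combination hq

theorem pow_four_ne_one_of_two_eq_zero (hq1 : q ^ 2 ≠ 1) (h2 : (2 : K) = 0) : q ^ 4 ≠ 1 := by
  intro hq4
  apply hq1
  have : (q ^ 2 - 1) ^ 2 = 0 := by linear_combination hq4 - (q ^ 2 - 1) * h2
  exact sub_eq_zero.mp (pow_eq_zero_iff two_ne_zero |>.mp this)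

end Field

section MulSelf

variable {K A : Type*} [Field K] [Ring A] [Algebra K A] {q : K} {a b u w : A}

theorem mul_self_eq_zero_of_two_ne_zero (h2 : (2 : K) ≠ 0) (ha : a * a + a * a = 0) :
    a * a = 0 := by
  rw [← two_smul K] at ha
  exact (smul_eq_zero.mp ha).resolve_left h2

/-- In characteristic `2` the relation `ψ_i ψ_i + ψ_i ψ_i = 0` is empty, and `ψ_i² = 0` has to
come from the `q`-commutation of `ψ_i` with `v_i^{±1}` instead: here `a, b, u, w` is
`ψ_i, ψ_i†, v_i, v_i⁻¹`, or `ψ_i†, ψ_i, q⁻¹ v_i⁻¹, q v_i`. -/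
theorem mul_self_eq_zero_of_qFermion (hq0 : q ≠ 0) (hq4 : q ^ 4 ≠ 1)
    (hu : a * b + q⁻¹ • (b * a) = u) (hw : a * b + q • (b * a) = w)
    (hua : u * a = q • (a * u)) (hwa : w * a = q⁻¹ • (a * w)) (huw : u * w = 1) :
    a * a = 0 := by
  rw [← hu] at hua
  rw [← hw] at hwa
  simp only [add_mul, mul_add, smul_mul_assoc, mul_smul_comm, smul_add, smul_smul,
    mul_assoc] at hua hwa
  have haab : a * (a * b) = 0 := by
    have h4 : (q ^ 4 - 1) • (a * (a * b)) = 0 := by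
      linear_combination (norm := skip) (-q ^ 3) • hua + q • hwa
      match_scalars <;> field_simp <;> ring
    exact (smul_eq_zero.mp h4).resolve_left (sub_ne_zero.mpr hq4)
  calc a * a = a * a * u * w := by rw [mul_assoc _ u, huw, mul_one]
    _ = 0 := by
      rw [← hu, mul_add, mul_smul_comm, ← mul_assoc (a * a) b, mul_assoc a a b, haab,
        mul_assoc a a (a * b), haab]
      simp

end MulSelf

namespace CliffordRel

variable {K A : Type*} [Field K] [Ring A] [Algebra K A] {q : K} {n : ℕ}
  {ψ ψd v vinv : ℕ → A} (h : CliffordRel K A q n ψ ψd v vinv)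
include h

theorem antiCommute_ψ_ψ (i j : ℕ) (hi : i < n := by omega) (hj : j < n := by omega) :
    AntiCommute (ψ i) (ψ j) :=
  .of_add_eq_zero (h.ψ_ψ i j hi hj)

theorem antiCommute_ψd_ψd (i j : ℕ) (hi : i < n := by omega) (hj : j < n := by omega) :
    AntiCommute (ψd i) (ψd j) :=
  .of_add_eq_zero (h.ψd_ψd i j hi hj)

theorem antiCommute_ψ_ψd (i j : ℕ) (hi : i < n := by omega) (hj : j < n := by omega)
    (hij : i ≠ j := by omega) : AntiCommute (ψ i) (ψd j) :=
  .of_add_eq_zero (h.ψ_ψd i j hi hj hij)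

theorem antiCommute_ψd_ψ (i j : ℕ) (hi : i < n := by omega) (hj : j < n := by omega)
    (hij : i ≠ j := by omega) : AntiCommute (ψd i) (ψ j) :=
  (h.antiCommute_ψ_ψd j i hj hi hij.symm).symm

theorem commute_v_v (i j : ℕ) (hi : i < n := by omega) (hj : j < n := by omega) :
    Commute (v i) (v j) :=
  h.v_comm i j hi hj

theorem commute_v_vinv (i j : ℕ) (hi : i < n := by omega) (hj : j < n := by omega) :
    Commute (v i) (vinv j) :=
  (h.commute_v_v i j).units_inv_right (u := ⟨v j, vinv j, h.v_vinv j hj, h.vinv_v j hj⟩)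

theorem commute_vinv_vinv (i j : ℕ) (hi : i < n := by omega) (hj : j < n := by omega) :
    Commute (vinv i) (vinv j) :=
  ((h.commute_v_vinv i j).symm.units_inv_right
    (u := ⟨v i, vinv i, h.v_vinv i hi, h.vinv_v i hi⟩)).symm

theorem qCommute_v_ψ (i j : ℕ) (hi : i < n := by omega) (hj : j < n := by omega) :
    QCommute q (if i = j then 1 else 0) (v i) (ψ j) := by
  rw [QCommute, h.v_ψ i j hi hj]
  split_ifs <;> simp

theorem qCommute_v_ψd (i j : ℕ) (hi : i < n := by omega) (hj : j < n := by omega) :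
    QCommute q (-if i = j then 1 else 0) (v i) (ψd j) := by
  rw [QCommute, h.v_ψd i j hi hj]
  split_ifs <;> simp

theorem qCommute_vinv_ψ (hq0 : q ≠ 0) (i j : ℕ) (hi : i < n := by omega)
    (hj : j < n := by omega) : QCommute q (-if i = j then 1 else 0) (vinv i) (ψ j) :=
  (h.qCommute_v_ψ i j).inv_left hq0 (h.v_vinv i hi) (h.vinv_v i hi)

theorem qCommute_vinv_ψd (hq0 : q ≠ 0) (i j : ℕ) (hi : i < n := by omega)
    (hj : j < n := by omega) : QCommute q (if i = j then 1 else 0) (vinv i) (ψd j) := by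
  simpa using (h.qCommute_v_ψd i j).inv_left hq0 (h.v_vinv i hi) (h.vinv_v i hi)

theorem sub_inv_smul_ψd_mul_ψ (i : ℕ) (hi : i < n := by omega) :
    (q - q⁻¹) • (ψd i * ψ i) = vinv i - v i := by
  rw [← h.rel_q i hi, ← h.rel_qinv i hi]
  module

theorem sub_inv_smul_ψ_mul_ψd (hq0 : q ≠ 0) (i : ℕ) (hi : i < n := by omega) :
    (q - q⁻¹) • (ψ i * ψd i) = q • v i - q⁻¹ • vinv i := by
  rw [← h.rel_q i hi, ← h.rel_qinv i hi]
  match_scalars <;> field_simp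
  ring

theorem ψ_mul_self (hq0 : q ≠ 0) (hq1 : q ^ 2 ≠ 1) (i : ℕ) (hi : i < n := by omega) :
    ψ i * ψ i = 0 := by
  by_cases h2 : (2 : K) = 0
  · refine mul_self_eq_zero_of_qFermion hq0 (pow_four_ne_one_of_two_eq_zero hq1 h2)
      (h.rel_qinv i hi) (h.rel_q i hi) ?_ ?_ (h.v_vinv i hi)
    · simpa [QCommute] using h.qCommute_v_ψ i i
    · simpa [QCommute] using h.qCommute_vinv_ψ hq0 i i
  · exact mul_self_eq_zero_of_two_ne_zero h2 (h.ψ_ψ i i hi hi)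

theorem ψd_mul_self (hq0 : q ≠ 0) (hq1 : q ^ 2 ≠ 1) (i : ℕ) (hi : i < n := by omega) :
    ψd i * ψd i = 0 := by
  by_cases h2 : (2 : K) = 0
  · refine mul_self_eq_zero_of_qFermion (b := ψ i) (u := q⁻¹ • vinv i) (w := q • v i) hq0
      (pow_four_ne_one_of_two_eq_zero hq1 h2) ?_ ?_ ?_ ?_ ?_
    · rw [← h.rel_q i hi, smul_add, smul_smul, inv_mul_cancel₀ hq0, one_smul, add_comm]
    · rw [← h.rel_qinv i hi, smul_add, smul_smul, mul_inv_cancel₀ hq0, one_smul, add_comm]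
    · simpa [QCommute, smul_comm q q⁻¹] using (h.qCommute_vinv_ψd hq0 i i).smul_left q⁻¹
    · simpa [QCommute, smul_comm q q⁻¹] using (h.qCommute_v_ψd i i).smul_left q
    · rw [smul_mul_smul_comm, inv_mul_cancel₀ hq0, h.vinv_v i hi, one_smul]
  · exact mul_self_eq_zero_of_two_ne_zero h2 (h.ψd_ψd i i hi hi)

theorem sub_inv_smul_ψd_mul_ψ_mul_ψ_mul_ψd_sub (hq0 : q ≠ 0) (hq1 : q ^ 2 ≠ 1) (i j : ℕ)
    (hi : i < n) (hj : j < n) :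
    (q - q⁻¹) • (ψd j * ψ j * (ψ i * ψd i) - ψd i * ψ i * (ψ j * ψd j)) =
      v i * vinv j - vinv i * v j := by
  have hqq := sub_inv_ne_zero_of_sq_ne_one hq0 hq1
  apply smul_right_injective A hqq
  calc (q - q⁻¹) • (q - q⁻¹) • (ψd j * ψ j * (ψ i * ψd i) - ψd i * ψ i * (ψ j * ψd j))
      = ((q - q⁻¹) • (ψd j * ψ j)) * ((q - q⁻¹) • (ψ i * ψd i))
        - ((q - q⁻¹) • (ψd i * ψ i)) * ((q - q⁻¹) • (ψ j * ψd j)) := by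
        rw [smul_mul_smul_comm, smul_mul_smul_comm]
        module
    _ = (vinv j - v j) * (q • v i - q⁻¹ • vinv i) - (vinv i - v i) * (q • v j - q⁻¹ • vinv j) := by
        rw [h.sub_inv_smul_ψd_mul_ψ j, h.sub_inv_smul_ψ_mul_ψd hq0 i, h.sub_inv_smul_ψd_mul_ψ i,
          h.sub_inv_smul_ψ_mul_ψd hq0 j]
    _ = (q - q⁻¹) • (v i * vinv j - vinv i * v j) := by
        simp only [sub_mul, mul_sub, mul_smul_comm]
        rw [(h.commute_v_vinv i j).eq, (h.commute_vinv_vinv i j).eq, (h.commute_v_v i j).eq,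
          (h.commute_v_vinv j i).eq]
        module

section Images

variable {c t t' : K} {E F Kk Kinv : ℕ → A}
  (hE : ∀ i, i < n → E i = if i + 1 < n then ψ i * ψd (i+1) else c • ψ i)
  (hF : ∀ i, i < n → F i = if i + 1 < n then ψ (i+1) * ψd i else ψd i)
  (hK : ∀ i, i < n → Kk i = if i + 1 < n then v i * vinv (i+1) else t • v i)
  (hKinv : ∀ i, i < n → Kinv i = if i + 1 < n then vinv i * v (i+1) else t' • vinv i)

include hK hKinv in
theorem Kk_mul_Kinv (htt' : t * t' = 1) (i : ℕ) (hi : i < n) :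
    Kk i * Kinv i = 1 ∧ Kinv i * Kk i = 1 := by
  rw [hK i hi, hKinv i hi]
  split_ifs with hi1
  · rw [(h.commute_vinv_vinv (i+1) i).mul_mul_mul_comm, (h.commute_v_v (i+1) i).mul_mul_mul_comm,
      h.v_vinv i hi, h.vinv_v (i+1) hi1, h.vinv_v i hi, h.v_vinv (i+1) hi1, one_mul]
    exact ⟨rfl, rfl⟩
  · rw [smul_mul_smul_comm, smul_mul_smul_comm, htt', mul_comm t', htt', h.v_vinv i hi,
      h.vinv_v i hi, one_smul]
    exact ⟨rfl, rfl⟩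

omit h in
include hK in
theorem commute_Kk_left {x : A} (i : ℕ) (hi : i < n) (hv : ∀ k < n, Commute (v k) x)
    (hvinv : ∀ k < n, Commute (vinv k) x) : Commute (Kk i) x := by
  rw [hK i hi]
  split_ifs with hi1
  · exact (hv i hi).mul_left (hvinv (i+1) hi1)
  · exact (hv i hi).smul_left t

include hK in
theorem commute_Kk_Kk (i j : ℕ) (hi : i < n) (hj : j < n) : Commute (Kk i) (Kk j) := by
  have hKv : ∀ k < n, Commute (Kk j) (v k) := fun k _ =>
    commute_Kk_left hK j hj (fun l _ => h.commute_v_v l k) (fun l _ => (h.commute_v_vinv k l).symm)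
  have hKvinv : ∀ k < n, Commute (Kk j) (vinv k) := fun k _ =>
    commute_Kk_left hK j hj (fun l _ => h.commute_v_vinv l k) (fun l _ => h.commute_vinv_vinv l k)
  exact commute_Kk_left hK i hi (fun k hk => (hKv k hk).symm) (fun k hk => (hKvinv k hk).symm)

include hK in
theorem qCommute_Kk_left (hq0 : q ≠ 0) {x : A} {m : ℕ → ℤ} (i : ℕ) (hi : i < n)
    (hv : ∀ k < n, QCommute q (m k) (v k) x) :
    QCommute q (if i + 1 < n then m i - m (i+1) else m i) (Kk i) x := by
  rw [hK i hi]
  split_ifs with hi1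
  · rw [sub_eq_add_neg]
    exact (hv i hi).mul_left hq0
      ((hv (i+1) hi1).inv_left hq0 (h.v_vinv _ hi1) (h.vinv_v _ hi1))
  · exact (hv i hi).smul_left t

include hE in
theorem qCommute_v_E (hq0 : q ≠ 0) (k j : ℕ) (hk : k < n) (hj : j < n) :
    QCommute q ((if k = j then 1 else 0) - if k = j + 1 ∧ j + 1 < n then 1 else 0) (v k) (E j) := by
  rw [hE j hj]
  by_cases hj1 : j + 1 < n
  · rw [if_pos hj1]
    convert (h.qCommute_v_ψ k j).mul_right hq0 (h.qCommute_v_ψd k (j+1)) using 2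
    simp only [hj1, and_true]
    omega
  · rw [if_neg hj1]
    simpa [hj1] using (h.qCommute_v_ψ k j).smul_right c

include hF in
theorem qCommute_v_F (hq0 : q ≠ 0) (k j : ℕ) (hk : k < n) (hj : j < n) :
    QCommute q ((if k = j + 1 ∧ j + 1 < n then 1 else 0) - if k = j then 1 else 0) (v k) (F j) := by
  rw [hF j hj]
  by_cases hj1 : j + 1 < n
  · rw [if_pos hj1]
    convert (h.qCommute_v_ψ k (j+1)).mul_right hq0 (h.qCommute_v_ψd k j) using 2
    simp only [hj1, and_true]
    omega
  · rw [if_neg hj1]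
    simpa [hj1] using h.qCommute_v_ψd k j

include hE hK in
theorem qCommute_Kk_E (hq0 : q ≠ 0) (i j : ℕ) (hi : i < n) (hj : j < n) :
    QCommute q (ospExp n i j) (Kk i) (E j) := by
  convert h.qCommute_Kk_left hK hq0 i hi (fun k hk => h.qCommute_v_E hE hq0 k j hk hj) using 2
  unfold ospExp
  split_ifs <;> omega

include hF hK in
theorem qCommute_Kk_F (hq0 : q ≠ 0) (i j : ℕ) (hi : i < n) (hj : j < n) :
    QCommute q (-ospExp n i j) (Kk i) (F j) := by
  convert h.qCommute_Kk_left hK hq0 i hi (fun k hk => h.qCommute_v_F hF hq0 k j hk hj) using 2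
  unfold ospExp
  split_ifs <;> omega

include hE hF hK hKinv in
theorem E_mul_F_sub_F_mul_E (hq0 : q ≠ 0) (hq1 : q ^ 2 ≠ 1) (i : ℕ) (hi : i + 1 < n) :
    E i * F i - F i * E i = (q - q⁻¹)⁻¹ • (Kk i - Kinv i) := by
  have hqq := sub_inv_ne_zero_of_sq_ne_one hq0 hq1
  rw [hE i (by omega), hF i (by omega), hK i (by omega), hKinv i (by omega)]
  simp only [if_pos hi]
  have hEF : ψ i * ψd (i+1) * (ψ (i+1) * ψd i) = ψd (i+1) * ψ (i+1) * (ψ i * ψd i) := by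
    rw [← mul_assoc, mul_assoc (ψ i),
      ← ((h.antiCommute_ψd_ψ (i+1) i).commute_mul_left (h.antiCommute_ψ_ψ (i+1) i)).eq]
    noncomm_ring
  have hFE : ψ (i+1) * ψd i * (ψ i * ψd (i+1)) = ψd i * ψ i * (ψ (i+1) * ψd (i+1)) := by
    rw [← mul_assoc, mul_assoc (ψ (i+1)),
      ← ((h.antiCommute_ψd_ψ i (i+1)).commute_mul_left (h.antiCommute_ψ_ψ i (i+1))).eq]
    noncomm_ring
  rw [hEF, hFE, ← h.sub_inv_smul_ψd_mul_ψ_mul_ψ_mul_ψd_sub hq0 hq1 i (i+1) (by omega) hi,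
    smul_smul, inv_mul_cancel₀ hqq, one_smul]

include hE hF hK hKinv in
theorem E_mul_F_add_F_mul_E (hq0 : q ≠ 0) (hq1 : q ^ 2 ≠ 1) (hct : c * (q - 1) = t)
    (hct' : c * (1 - q⁻¹) = -t') (i : ℕ) (hi : i + 1 = n) :
    E i * F i + F i * E i = (q - q⁻¹)⁻¹ • (Kk i - Kinv i) := by
  have hqq := sub_inv_ne_zero_of_sq_ne_one hq0 hq1
  rw [hE i (by omega), hF i (by omega), hK i (by omega), hKinv i (by omega)]
  simp only [if_neg (show ¬ i + 1 < n by omega)]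
  apply smul_right_injective A hqq
  calc (q - q⁻¹) • (c • ψ i * ψd i + ψd i * c • ψ i)
      = c • ((q - q⁻¹) • (ψ i * ψd i) + (q - q⁻¹) • (ψd i * ψ i)) := by
        rw [smul_mul_assoc, mul_smul_comm]
        module
    _ = c • (q • v i - q⁻¹ • vinv i + (vinv i - v i)) := by
        rw [h.sub_inv_smul_ψ_mul_ψd hq0 i, h.sub_inv_smul_ψd_mul_ψ i]
    _ = t • v i - t' • vinv i := by
        rw [← hct, ← neg_neg t', ← hct']
        module
    _ = (q - q⁻¹) • (q - q⁻¹)⁻¹ • (t • v i - t' • vinv i) := by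
        rw [smul_smul, mul_inv_cancel₀ hqq, one_smul]

include hE hF in
theorem commute_E_F (i j : ℕ) (hi : i < n) (hj : j < n) (hij : i ≠ j) : Commute (E i) (F j) := by
  rw [hE i hi, hF j hj]
  split_ifs with hi1 hj1 hj1
  · exact (h.antiCommute_ψ_ψ i (j+1)).commute_mul_mul (h.antiCommute_ψ_ψd i j)
      (h.antiCommute_ψd_ψ (i+1) (j+1)) (h.antiCommute_ψd_ψd (i+1) j)
  · exact (h.antiCommute_ψ_ψd i j).commute_mul_left (h.antiCommute_ψd_ψd (i+1) j)
  · exact ((h.antiCommute_ψ_ψ i (j+1)).commute_mul_right (h.antiCommute_ψ_ψd i j)).smul_left c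
  · omega

include hE hF hK hKinv in
theorem E_mul_F_sub_smul_F_mul_E (hq0 : q ≠ 0) (hq1 : q ^ 2 ≠ 1) (hct : c * (q - 1) = t)
    (hct' : c * (1 - q⁻¹) = -t') (i j : ℕ) (hi : i < n) (hj : j < n) :
    E i * F j - (if i + 1 = n ∧ j + 1 = n then (-1 : K) else 1) • (F j * E i) =
      if i = j then (q - q⁻¹)⁻¹ • (Kk i - Kinv i) else 0 := by
  rcases eq_or_ne i j with rfl | hij
  · by_cases hi1 : i + 1 < n
    · rw [if_neg (by omega), if_pos rfl, one_smul]
      exact h.E_mul_F_sub_F_mul_E hE hF hK hKinv hq0 hq1 i hi1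
    · rw [if_pos (by omega), if_pos rfl, neg_one_smul, sub_neg_eq_add]
      exact h.E_mul_F_add_F_mul_E hE hF hK hKinv hq0 hq1 hct hct' i (by omega)
  · rw [if_neg (by omega), if_neg hij, one_smul, sub_eq_zero]
    exact (h.commute_E_F hE hF i j hi hj hij).eq

include hE hF in
theorem commute_E_E_and_F_F (i j : ℕ) (hij : i + 2 ≤ j) (hj : j < n) :
    Commute (E i) (E j) ∧ Commute (F i) (F j) := by
  rw [hE i (by omega), hE j hj, hF i (by omega), hF j hj]
  simp only [if_pos (show i + 1 < n by omega)]
  split_ifs with hj1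
  · exact ⟨(h.antiCommute_ψ_ψ i j).commute_mul_mul (h.antiCommute_ψ_ψd i (j+1))
        (h.antiCommute_ψd_ψ (i+1) j) (h.antiCommute_ψd_ψd (i+1) (j+1)),
      (h.antiCommute_ψ_ψ (i+1) (j+1)).commute_mul_mul (h.antiCommute_ψ_ψd (i+1) j)
        (h.antiCommute_ψd_ψ i (j+1)) (h.antiCommute_ψd_ψd i j)⟩
  · exact ⟨((h.antiCommute_ψ_ψ i j).commute_mul_left (h.antiCommute_ψd_ψ (i+1) j)).smul_right c,
      (h.antiCommute_ψ_ψd (i+1) j).commute_mul_left (h.antiCommute_ψd_ψd i j)⟩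

include hE hF in
theorem serre_distant (i j : ℕ) (hi : i < n) (hj : j < n) (hij : i + 2 ≤ j ∨ j + 2 ≤ i) :
    E i * E j = E j * E i ∧ F i * F j = F j * F i := by
  rcases hij with hij | hji
  · exact (h.commute_E_E_and_F_F hE hF i j hij hj).imp Commute.eq Commute.eq
  · exact (h.commute_E_E_and_F_F hE hF j i hji hi).imp (·.eq.symm) (·.eq.symm)

include hE in
theorem E_mul_self (hq0 : q ≠ 0) (hq1 : q ^ 2 ≠ 1) (i : ℕ) (hi : i < n) : E i * E i = 0 := by
  rw [hE i hi]
  split_ifs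
  · exact (h.antiCommute_ψ_ψd i (i+1)).mul_self_eq_zero (h.ψ_mul_self hq0 hq1 i)
  · rw [smul_mul_smul_comm, h.ψ_mul_self hq0 hq1 i, smul_zero]

include hF in
theorem F_mul_self (hq0 : q ≠ 0) (hq1 : q ^ 2 ≠ 1) (i : ℕ) (hi : i < n) : F i * F i = 0 := by
  rw [hF i hi]
  split_ifs
  · exact (h.antiCommute_ψ_ψd (i+1) i).mul_self_eq_zero (h.ψ_mul_self hq0 hq1 (i+1))
  · exact h.ψd_mul_self hq0 hq1 i

include hE in
theorem E_mul_E_mul_E (hq0 : q ≠ 0) (hq1 : q ^ 2 ≠ 1) (i j : ℕ) (hi : i + 1 < n) (hj : j < n)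
    (hij : i + 1 = j ∨ j + 1 = i) : E i * E j * E i = 0 := by
  rw [hE i (by omega), if_pos hi]
  rcases hij with rfl | rfl
  · refine (h.antiCommute_ψ_ψd i (i+1)).mul_mul_mul_eq_zero_left (h.ψ_mul_self hq0 hq1 i) ?_
    rw [hE (i+1) hj]
    split_ifs
    · exact .inl ((h.antiCommute_ψ_ψ i (i+1)).commute_mul_right (h.antiCommute_ψ_ψd i (i+1+1)))
    · exact .inr ((h.antiCommute_ψ_ψ i (i+1)).smul_right c)
  · refine (h.antiCommute_ψ_ψd (j+1) (j+1+1)).mul_mul_mul_eq_zero_right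
      (h.ψd_mul_self hq0 hq1 (j+1+1)) (.inl ?_)
    rw [hE j hj, if_pos (by omega)]
    exact (h.antiCommute_ψd_ψ (j+1+1) j).commute_mul_right (h.antiCommute_ψd_ψd (j+1+1) (j+1))

include hF in
theorem F_mul_F_mul_F (hq0 : q ≠ 0) (hq1 : q ^ 2 ≠ 1) (i j : ℕ) (hi : i + 1 < n) (hj : j < n)
    (hij : i + 1 = j ∨ j + 1 = i) : F i * F j * F i = 0 := by
  rw [hF i (by omega), if_pos hi]
  rcases hij with rfl | rfl
  · refine (h.antiCommute_ψ_ψd (i+1) i).mul_mul_mul_eq_zero_right (h.ψd_mul_self hq0 hq1 i) ?_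
    rw [hF (i+1) hj]
    split_ifs
    · exact .inl ((h.antiCommute_ψd_ψ i (i+1+1)).commute_mul_right (h.antiCommute_ψd_ψd i (i+1)))
    · exact .inr (h.antiCommute_ψd_ψd i (i+1))
  · refine (h.antiCommute_ψ_ψd (j+1+1) (j+1)).mul_mul_mul_eq_zero_left
      (h.ψ_mul_self hq0 hq1 (j+1+1)) (.inl ?_)
    rw [hF j hj, if_pos (by omega)]
    exact (h.antiCommute_ψ_ψ (j+1+1) (j+1)).commute_mul_right (h.antiCommute_ψ_ψd (j+1+1) j)

include hE hF in
theorem serre_adjacent (hq0 : q ≠ 0) (hq1 : q ^ 2 ≠ 1) (i j : ℕ) (hi : i < n) (hj : j < n)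
    (hij : i + 1 = j ∨ j + 1 = i) (hi1 : i + 1 < n) :
    E i ^ 2 * E j - (q + q⁻¹) • (E i * E j * E i) + E j * E i ^ 2 = 0 ∧
      F i ^ 2 * F j - (q + q⁻¹) • (F i * F j * F i) + F j * F i ^ 2 = 0 := by
  simp [sq, h.E_mul_self hE hq0 hq1 i hi, h.E_mul_E_mul_E hE hq0 hq1 i j hi1 hj hij,
    h.F_mul_self hF hq0 hq1 i hi, h.F_mul_F_mul_F hF hq0 hq1 i j hi1 hj hij]

include hE hF in
theorem serre_odd (hq0 : q ≠ 0) (hq1 : q ^ 2 ≠ 1) (hn : 2 ≤ n) :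
    E (n-1) ^ 3 * E (n-2)
        + (1 - q - q⁻¹) • (E (n-1) ^ 2 * E (n-2) * E (n-1)
            + E (n-1) * E (n-2) * E (n-1) ^ 2)
        + E (n-2) * E (n-1) ^ 3 = 0 ∧
      F (n-1) ^ 3 * F (n-2)
        + (1 - q - q⁻¹) • (F (n-1) ^ 2 * F (n-2) * F (n-1)
            + F (n-1) * F (n-2) * F (n-1) ^ 2)
        + F (n-2) * F (n-1) ^ 3 = 0 := by
  have hE2 : E (n-1) ^ 2 = 0 := by rw [sq, h.E_mul_self hE hq0 hq1 (n-1) (by omega)]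
  have hF2 : F (n-1) ^ 2 = 0 := by rw [sq, h.F_mul_self hF hq0 hq1 (n-1) (by omega)]
  simp [pow_succ, hE2, hF2]

end Images

end CliffordRel

theorem stmt9_general {K A : Type*} [Field K] [Ring A] [Algebra K A]
    (q s I : K) (hq0 : q ≠ 0) (hq1 : q ^ 2 ≠ 1) (hs : s ^ 2 = q) (hs0 : s ≠ 0)
    (hI : I ^ 2 = -1)
    (n : ℕ) (ψ ψd v vinv : ℕ → A)
    (h : CliffordRel K A q n ψ ψd v vinv)
    (E F Kk Kinv : ℕ → A)
    (hE : ∀ i, i < n → E i = if i + 1 < n then ψ i * ψd (i+1)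
                             else (I * (s - s⁻¹)⁻¹) • ψ i)
    (hF : ∀ i, i < n → F i = if i + 1 < n then ψ (i+1) * ψd i else ψd i)
    (hK : ∀ i, i < n → Kk i = if i + 1 < n then v i * vinv (i+1) else (I * s) • v i)
    (hKinv : ∀ i, i < n → Kinv i = if i + 1 < n then vinv i * v (i+1)
                                   else (-(I) * s⁻¹) • vinv i) :
    -- relations (R1): the `k_i` are invertible and commute
    (∀ i, i < n → Kk i * Kinv i = 1 ∧ Kinv i * Kk i = 1) ∧
    (∀ i j, i < n → j < n → Kk i * Kk j = Kk j * Kk i) ∧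
    -- `k_i e_j k_i⁻¹ = q_i^{a_ij} e_j`, `k_i f_j k_i⁻¹ = q_i^{-a_ij} f_j`
    (∀ i j, i < n → j < n → Kk i * E j = (q ^ ospExp n i j) • (E j * Kk i)) ∧
    (∀ i j, i < n → j < n → Kk i * F j = (q ^ (-ospExp n i j)) • (F j * Kk i)) ∧
    -- `e_i f_j - (-1)^{[e_i][f_j]} f_j e_i = δ_ij (k_i - k_i⁻¹)/(q - q⁻¹)`
    (∀ i j, i < n → j < n →
      E i * F j - (if i + 1 = n ∧ j + 1 = n then (-1 : K) else 1) • (F j * E i) =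
        if i = j then (q - q⁻¹)⁻¹ • (Kk i - Kinv i) else 0) ∧
    -- quantum Serre relations: commuting non-adjacent generators
    (∀ i j, i < n → j < n → i + 2 ≤ j ∨ j + 2 ≤ i →
      E i * E j = E j * E i ∧ F i * F j = F j * F i) ∧
    -- quantum Serre relations for adjacent generators, squared index not the odd one
    (∀ i j, i < n → j < n → (i + 1 = j ∨ j + 1 = i) → i + 1 < n →
      E i ^ 2 * E j - (q + q⁻¹) • (E i * E j * E i) + E j * E i ^ 2 = 0 ∧
      F i ^ 2 * F j - (q + q⁻¹) • (F i * F j * F i) + F j * F i ^ 2 = 0) ∧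
    -- higher order quantum Serre relations for the odd generator
    (2 ≤ n →
      E (n-1) ^ 3 * E (n-2)
        + (1 - q - q⁻¹) • (E (n-1) ^ 2 * E (n-2) * E (n-1)
            + E (n-1) * E (n-2) * E (n-1) ^ 2)
        + E (n-2) * E (n-1) ^ 3 = 0 ∧
      F (n-1) ^ 3 * F (n-2)
        + (1 - q - q⁻¹) • (F (n-1) ^ 2 * F (n-2) * F (n-1)
            + F (n-1) * F (n-2) * F (n-1) ^ 2)
        + F (n-2) * F (n-1) ^ 3 = 0) := by
  have hs1 : s ^ 2 ≠ 1 := fun hs1 => hq1 (by rw [← hs, hs1, one_pow])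
  have hss : s - s⁻¹ ≠ 0 := sub_inv_ne_zero_of_sq_ne_one hs0 hs1
  have htt' : I * s * (-I * s⁻¹) = 1 := by
    field_simp
    linear_combination -hI
  have hct : I * (s - s⁻¹)⁻¹ * (q - 1) = I * s := by
    rw [← hs]
    field_simp
  have hct' : I * (s - s⁻¹)⁻¹ * (1 - q⁻¹) = -(-I * s⁻¹) := by
    rw [← hs]
    field_simp
  exact ⟨h.Kk_mul_Kinv hK hKinv htt', h.commute_Kk_Kk hK, h.qCommute_Kk_E hE hK hq0,
    h.qCommute_Kk_F hF hK hq0, h.E_mul_F_sub_smul_F_mul_E hE hF hK hKinv hq0 hq1 hct hct',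
    h.serre_distant hE hF, h.serre_adjacent hE hF hq0 hq1,
    h.serre_odd hE hF hq0 hq1⟩

/-- the assignments `e_i ↦ ψ_i ψ_{i+1}†`, `f_i ↦ ψ_{i+1} ψ_i†`,
`k_i ↦ v_i v_{i+1}⁻¹` (for `i < n`), `e_n ↦ √-1 (q^{1/2} - q^{-1/2})⁻¹ ψ_n`,
`f_n ↦ ψ_n†`, `k_n ↦ √-1 q^{1/2} v_n` define a superalgebra homomorphism
`π : U_q(osp(1|2n), Θ₁) → Cl_q(n)`: the images satisfy all defining relations of
`U_q(osp(1|2n), Θ₁)`. Here `s = q^{1/2}` and `I = √-1` in `K`. -/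
theorem stmt9 {K A : Type*} [Field K] [Ring A] [Algebra K A]
    (q s I : K) (hq0 : q ≠ 0) (hq1 : q ^ 2 ≠ 1) (hs : s ^ 2 = q) (hs0 : s ≠ 0)
    (hI : I ^ 2 = -1)
    (n : ℕ) (hn : 1 ≤ n) (ψ ψd v vinv : ℕ → A)
    (h : CliffordRel K A q n ψ ψd v vinv)
    (E F Kk Kinv : ℕ → A)
    (hE : ∀ i, i < n → E i = if i + 1 < n then ψ i * ψd (i+1)
                             else (I * (s - s⁻¹)⁻¹) • ψ i)
    (hF : ∀ i, i < n → F i = if i + 1 < n then ψ (i+1) * ψd i else ψd i)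
    (hK : ∀ i, i < n → Kk i = if i + 1 < n then v i * vinv (i+1) else (I * s) • v i)
    (hKinv : ∀ i, i < n → Kinv i = if i + 1 < n then vinv i * v (i+1)
                                   else (-(I) * s⁻¹) • vinv i) :
    -- relations (R1): the `k_i` are invertible and commute
    (∀ i, i < n → Kk i * Kinv i = 1 ∧ Kinv i * Kk i = 1) ∧
    (∀ i j, i < n → j < n → Kk i * Kk j = Kk j * Kk i) ∧
    -- `k_i e_j k_i⁻¹ = q_i^{a_ij} e_j`, `k_i f_j k_i⁻¹ = q_i^{-a_ij} f_j`
    (∀ i j, i < n → j < n → Kk i * E j = (q ^ ospExp n i j) • (E j * Kk i)) ∧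
    (∀ i j, i < n → j < n → Kk i * F j = (q ^ (-ospExp n i j)) • (F j * Kk i)) ∧
    -- `e_i f_j - (-1)^{[e_i][f_j]} f_j e_i = δ_ij (k_i - k_i⁻¹)/(q - q⁻¹)`
    (∀ i j, i < n → j < n →
      E i * F j - (if i + 1 = n ∧ j + 1 = n then (-1 : K) else 1) • (F j * E i) =
        if i = j then (q - q⁻¹)⁻¹ • (Kk i - Kinv i) else 0) ∧
    -- quantum Serre relations: commuting non-adjacent generators
    (∀ i j, i < n → j < n → i + 2 ≤ j ∨ j + 2 ≤ i →
      E i * E j = E j * E i ∧ F i * F j = F j * F i) ∧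
    -- quantum Serre relations for adjacent generators, squared index not the odd one
    (∀ i j, i < n → j < n → (i + 1 = j ∨ j + 1 = i) → i + 1 < n →
      E i ^ 2 * E j - (q + q⁻¹) • (E i * E j * E i) + E j * E i ^ 2 = 0 ∧
      F i ^ 2 * F j - (q + q⁻¹) • (F i * F j * F i) + F j * F i ^ 2 = 0) ∧
    -- higher order quantum Serre relations for the odd generator
    (2 ≤ n →
      E (n-1) ^ 3 * E (n-2)
        + (1 - q - q⁻¹) • (E (n-1) ^ 2 * E (n-2) * E (n-1)
            + E (n-1) * E (n-2) * E (n-1) ^ 2)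
        + E (n-2) * E (n-1) ^ 3 = 0 ∧
      F (n-1) ^ 3 * F (n-2)
        + (1 - q - q⁻¹) • (F (n-1) ^ 2 * F (n-2) * F (n-1)
            + F (n-1) * F (n-2) * F (n-1) ^ 2)
        + F (n-2) * F (n-1) ^ 3 = 0) :=
  stmt9_general q s I hq0 hq1 hs hs0 hI n ψ ψd v vinv h E F Kk Kinv hE hF hK hKinv
end

section
/- The spinor representation V_q(n) of U_q(osp(1|2n), Θ₁), obtained by pulling back the Fock space of Cl_q(n) along the homomorphism π, is irreducible, has dimension 2^n, and the vacuum vector |0⟩ is a highest weight vector of weight (1, 1, ..., 1, √(-1) q^{1/2}), i.e., e_i |0⟩ = 0 for all i, k_i |0⟩ = |0⟩ for i < n, and k_n |0⟩ = √(-1) q^{1/2} |0⟩. -/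
open Finset in
/-- The sign `(-1)^{r_1 + ⋯ + r_{i-1}}` appearing in the Fock space action. -/
def fockSgn {K : Type*} [Field K] {n : ℕ} (r : Fin n → Fin 2) (i : Fin n) : K :=
  (-1) ^ (∑ j : Fin n, if (j : ℕ) < (i : ℕ) then ((r j : ℕ)) else 0)

/-- The Fock space `V_q(n)`, with basis `|r⟩` for `r ∈ {0,1}ⁿ`, realised as the space of
`K`-valued functions on `{0,1}ⁿ` (`f r` is the coefficient of `|r⟩`). -/
def FockV (K : Type*) [Field K] (n : ℕ) : Type _ := (Fin n → Fin 2) → K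

noncomputable instance (K : Type*) [Field K] (n : ℕ) : AddCommGroup (FockV K n) :=
  inferInstanceAs (AddCommGroup ((Fin n → Fin 2) → K))
noncomputable instance (K : Type*) [Field K] (n : ℕ) : Module K (FockV K n) :=
  inferInstanceAs (Module K ((Fin n → Fin 2) → K))

/-- The operator `ψ_i` on the Fock space: `ψ_i |r⟩ = (-1)^{r_1+⋯+r_{i-1}} |r - e_i⟩`. -/
def ψop {K : Type*} [Field K] {n : ℕ} (i : Fin n) (f : FockV K n) : FockV K n :=
  fun r => if r i = 0 then fockSgn r i * f (Function.update r i 1) else 0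

/-- The operator `ψ_i†` on the Fock space: `ψ_i† |r⟩ = (-1)^{r_1+⋯+r_{i-1}} |r + e_i⟩`. -/
def ψdop {K : Type*} [Field K] {n : ℕ} (i : Fin n) (f : FockV K n) : FockV K n :=
  fun r => if r i = 1 then fockSgn r i * f (Function.update r i 0) else 0

/-- The operator `v_i` on the Fock space: `v_i |r⟩ = q^{-r_i} |r⟩`. -/
def vop {K : Type*} [Field K] {n : ℕ} (q : K) (i : Fin n) (f : FockV K n) : FockV K n :=
  fun r => q⁻¹ ^ ((r i : ℕ)) * f r

/-- The operator `v_i⁻¹` on the Fock space: `v_i⁻¹ |r⟩ = q^{r_i} |r⟩`. -/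
def vinvop {K : Type*} [Field K] {n : ℕ} (q : K) (i : Fin n) (f : FockV K n) : FockV K n :=
  fun r => q ^ ((r i : ℕ)) * f r

/-- The action of `π(e_i)` on the Fock space (`i = 0,…,n-1`, 0-indexed; the last index is the
odd generator): `e_i ↦ ψ_i ψ_{i+1}†` for `i+1 < n`, `e_n ↦ √-1 (q^{1/2}-q^{-1/2})⁻¹ ψ_n`. -/
noncomputable def Eop {K : Type*} [Field K] {n : ℕ} (s I : K) (i : Fin n) :
    FockV K n → FockV K n :=
  if h : (i : ℕ) + 1 < n then fun f => ψop i (ψdop ⟨(i : ℕ) + 1, h⟩ f)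
  else fun f => (I * (s - s⁻¹)⁻¹) • ψop i f

/-- The action of `π(f_i)` on the Fock space: `f_i ↦ ψ_{i+1} ψ_i†` for `i+1 < n`,
`f_n ↦ ψ_n†`. -/
noncomputable def Fop {K : Type*} [Field K] {n : ℕ} (i : Fin n) :
    FockV K n → FockV K n :=
  if h : (i : ℕ) + 1 < n then fun f => ψop ⟨(i : ℕ) + 1, h⟩ (ψdop i f)
  else fun f => ψdop i f

/-- The action of `π(k_i)` on the Fock space: `k_i ↦ v_i v_{i+1}⁻¹` for `i+1 < n`,
`k_n ↦ √-1 q^{1/2} v_n`. -/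
noncomputable def Kop {K : Type*} [Field K] {n : ℕ} (q s I : K) (i : Fin n) :
    FockV K n → FockV K n :=
  if h : (i : ℕ) + 1 < n then fun f => vop q i (vinvop q ⟨(i : ℕ) + 1, h⟩ f)
  else fun f => (I * s) • vop q i f

/-- The action of `π(k_i⁻¹)` on the Fock space. -/
noncomputable def Kinvop {K : Type*} [Field K] {n : ℕ} (q s I : K) (i : Fin n) :
    FockV K n → FockV K n :=
  if h : (i : ℕ) + 1 < n then fun f => vinvop q i (vop q ⟨(i : ℕ) + 1, h⟩ f)
  else fun f => (-(I) * s⁻¹) • vinvop q i f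

/-- The vacuum vector `|0⟩`. -/
noncomputable def fockVac (K : Type*) [Field K] (n : ℕ) : FockV K n :=
  fun r => if r = 0 then 1 else 0

/-!
The operators `Kop i` act diagonally on the basis `|r⟩`, and their eigenvalues determine `r`
(read off from the last site backwards), so a nonzero invariant subspace contains some `|r⟩`.
If `r ≠ 0` and `i` is its last occupied site, `Eop i` moves that particle one site to the right
(or annihilates it when `i` is the last site) and `Fop i` moves it back, each up to a nonzero
scalar. This lowers `height r`, so `|r⟩` lies in the subspace iff the vacuum does, and then so does
every basis vector.
-/

open Finset Function

theorem Submodule.exists_single_mem_of_injective {K σ ι : Type*} [Field K] [Fintype σ]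
    [DecidableEq σ] {W : Submodule K (σ → K)} (χ : ι → σ → K) (hχ : Injective fun a i => χ i a)
    (hW : ∀ i, ∀ f ∈ W, χ i * f ∈ W) (hne : W ≠ ⊥) : ∃ a, Pi.single a (1 : K) ∈ W := by
  obtain ⟨f, hfW, hf0⟩ := W.ne_bot_iff.mp hne
  obtain ⟨a, ha⟩ := Function.ne_iff.mp hf0
  have separate : ∀ T : Finset σ, a ∉ T →
      ∃ p : σ → K, (∀ g ∈ W, p * g ∈ W) ∧ p a ≠ 0 ∧ ∀ b ∈ T, p b = 0 := by
    intro T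
    induction T using Finset.induction_on with
    | empty => exact fun _ => ⟨1, fun g hg => by rwa [one_mul], one_ne_zero, by simp⟩
    | insert b T hbT ih =>
      intro haT
      obtain ⟨p, hpW, hpa, hpT⟩ := ih fun h => haT (mem_insert_of_mem h)
      obtain ⟨i, hi⟩ := Function.ne_iff.mp (hχ.ne fun h : a = b => haT (h ▸ mem_insert_self a T))
      refine ⟨(χ i - χ i b • 1) * p, fun g hg => ?_, ?_, ?_⟩
      · rw [mul_assoc, sub_mul, smul_mul_assoc, one_mul]
        exact W.sub_mem (hW i _ (hpW g hg)) (W.smul_mem _ (hpW g hg))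
      · simpa [sub_eq_zero, hpa] using hi
      · simp +contextual [hpT]
  obtain ⟨p, hpW, hpa, hp0⟩ := separate (univ.erase a) (notMem_erase a univ)
  have hpf : p * f = (p a * f a) • Pi.single a 1 := by
    funext x
    by_cases hx : x = a
    · simp [hx]
    · simp [hx, hp0 x (mem_erase.2 ⟨hx, mem_univ x⟩)]
  exact ⟨a, (W.smul_mem_iff (mul_ne_zero hpa ha)).1 (hpf ▸ hpW f hfW)⟩

namespace FockV

variable {K : Type*} [Field K] {n : ℕ}

lemma fockSgn_ne_zero (r : Fin n → Fin 2) (i : Fin n) : (fockSgn r i : K) ≠ 0 :=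
  pow_ne_zero _ (neg_ne_zero.2 one_ne_zero)

lemma fockSgn_update (r : Fin n → Fin 2) (i : Fin n) (b : Fin 2) :
    (fockSgn (update r i b) i : K) = fockSgn r i := by
  unfold fockSgn
  congr 1
  refine sum_congr rfl fun j _ => ?_
  split_ifs with h
  · rw [update_of_ne (Fin.ne_of_val_ne h.ne)]
  · rfl

lemma finrank_eq : Module.finrank K (FockV K n) = 2 ^ n :=
  (Module.finrank_fintype_fun_eq_card K).trans (by simp)

lemma fockVac_eq_single : fockVac K n = Pi.single 0 1 := by
  funext r
  simp [fockVac, Pi.single_apply]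

def SendsSingle (T : FockV K n → FockV K n) (r r' : Fin n → Fin 2) : Prop :=
  ∃ d : K, d ≠ 0 ∧ ∀ c : K, T (Pi.single r c) = Pi.single r' (d * c)

namespace SendsSingle

variable {T T' : FockV K n → FockV K n} {r r' r'' : Fin n → Fin 2}

lemma comp (h' : SendsSingle T' r' r'') (h : SendsSingle T r r') :
    SendsSingle (fun f => T' (T f)) r r'' := by
  obtain ⟨d, hd, hT⟩ := h
  obtain ⟨d', hd', hT'⟩ := h'
  exact ⟨d' * d, mul_ne_zero hd' hd, fun c => by dsimp only; rw [hT, hT', mul_assoc]⟩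

lemma smul (h : SendsSingle T r r') {a : K} (ha : a ≠ 0) :
    SendsSingle (fun f => a • T f) r r' := by
  obtain ⟨d, hd, hT⟩ := h
  refine ⟨a * d, mul_ne_zero ha hd, fun c => ?_⟩
  dsimp only
  rw [hT, mul_assoc]
  exact (Pi.single_smul' r' a (d * c)).symm

lemma mem {W : Submodule K (FockV K n)} (h : SendsSingle T r r')
    (hW : ∀ f ∈ W, T f ∈ W) (hr : (Pi.single r 1 : FockV K n) ∈ W) :
    (Pi.single r' 1 : FockV K n) ∈ W := by
  obtain ⟨d, hd, hT⟩ := h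
  have hmem := hW _ hr
  rw [hT, ← smul_eq_mul, Pi.single_smul'] at hmem
  exact (W.smul_mem_iff hd).1 hmem

end SendsSingle

lemma sendsSingle_ψop {i : Fin n} {r : Fin n → Fin 2} (h : r i = 1) :
    SendsSingle (K := K) (ψop i) r (update r i 0) := by
  refine ⟨fockSgn r i, fockSgn_ne_zero r i, fun c => funext fun r' => ?_⟩
  by_cases h' : r' = update r i 0
  · subst h'
    simp [ψop, fockSgn_update, ← h]
  · rw [Pi.single_eq_of_ne h']
    rw [eq_update_iff] at h'
    simp [ψop, Pi.single_apply, update_eq_iff, h]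
    exact fun h₀ hr => (h' ⟨h₀, hr⟩).elim

lemma sendsSingle_ψdop {i : Fin n} {r : Fin n → Fin 2} (h : r i = 0) :
    SendsSingle (K := K) (ψdop i) r (update r i 1) := by
  refine ⟨fockSgn r i, fockSgn_ne_zero r i, fun c => funext fun r' => ?_⟩
  by_cases h' : r' = update r i 1
  · subst h'
    simp [ψdop, fockSgn_update, ← h]
  · rw [Pi.single_eq_of_ne h']
    rw [eq_update_iff] at h'
    simp [ψdop, Pi.single_apply, update_eq_iff, h]
    exact fun h₀ hr => (h' ⟨h₀, hr⟩).elim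

lemma ψop_single_of_eq_zero {i : Fin n} {r : Fin n → Fin 2} (h : r i = 0) (c : K) :
    ψop i (Pi.single r c : FockV K n) = 0 := by
  funext r'
  simp [ψop, update_eq_iff, h]
  rfl

lemma Eop_fockVac (s I : K) (i : Fin n) : Eop s I i (fockVac K n) = 0 := by
  rw [fockVac_eq_single]
  unfold Eop
  split_ifs with h
  · obtain ⟨d, -, hd⟩ := sendsSingle_ψdop (K := K) (i := ⟨i + 1, h⟩) (r := 0) rfl
    dsimp only
    rw [hd, ψop_single_of_eq_zero (update_of_ne (Fin.ne_of_val_ne (by simp)) _ _)]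
  · dsimp only
    rw [ψop_single_of_eq_zero (r := 0) rfl, smul_zero]

def kWeight (q s I : K) (i : Fin n) (r : Fin n → Fin 2) : K :=
  if h : (i : ℕ) + 1 < n then q⁻¹ ^ (r i : ℕ) * q ^ (r ⟨i + 1, h⟩ : ℕ)
  else I * s * q⁻¹ ^ (r i : ℕ)

lemma Kop_eq_mul (q s I : K) (i : Fin n) (f : (Fin n → Fin 2) → K) :
    Kop q s I i f = kWeight q s I i * f := by
  funext r
  rw [Pi.mul_apply]
  unfold Kop kWeight
  split_ifs
  · simp only [vop, vinvop]
    ring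
  · exact (mul_assoc _ _ _).symm

lemma pow_finTwo_injective {x : K} (hx : x ≠ 1) : Injective fun a : Fin 2 => x ^ (a : ℕ) := by
  intro a b h
  fin_cases a <;> fin_cases b <;> simp_all [eq_comm]

lemma kWeight_injective {q s I : K} (hq0 : q ≠ 0) (hq1 : q ≠ 1) (hIs : I * s ≠ 0) :
    Injective fun (r : Fin n → Fin 2) (i : Fin n) => kWeight q s I i r := by
  intro r r' hrr'
  by_contra hne
  obtain ⟨i, hi⟩ := (Set.toFinite {j | r j ≠ r' j}).exists_maximal (Function.ne_iff.mp hne)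
  have hright : ∀ j, i < j → r j = r' j := fun j hij => by_contra fun hj => hi.not_gt hj hij
  have hpow := pow_finTwo_injective (inv_ne_one.2 hq1)
  have hri := congrFun hrr' i
  simp only [kWeight] at hri
  split_ifs at hri with h
  · rw [hright ⟨i + 1, h⟩ (Fin.lt_def.2 (by simp))] at hri
    exact hi.prop (hpow (mul_right_cancel₀ (pow_ne_zero _ hq0) hri))
  · exact hi.prop (hpow (mul_left_cancel₀ hIs hri))

lemma Kop_fockVac (q s I : K) (i : Fin n) :
    Kop q s I i (fockVac K n) = (if (i : ℕ) + 1 < n then 1 else I * s) • fockVac K n := by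
  rw [fockVac_eq_single, Kop_eq_mul]
  funext r
  show kWeight q s I i r * Pi.single (M := fun _ => K) 0 1 r =
    _ * Pi.single (M := fun _ => K) 0 1 r
  by_cases hr : r = 0
  · subst hr
    unfold kWeight
    split_ifs <;> simp
  · simp [hr]

/-- The number of lowering steps `Eop` needs to bring `|r⟩` down to the vacuum. -/
def height (r : Fin n → Fin 2) : ℕ := ∑ j, (r j : ℕ) * (n - j)

lemma height_update_add (r : Fin n → Fin 2) (i : Fin n) (b : Fin 2) :
    height (update r i b) + (r i : ℕ) * (n - i) = height r + (b : ℕ) * (n - i) := by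
  unfold height
  rw [← add_sum_erase _ _ (mem_univ i),
    ← add_sum_erase _ (fun j => (r j : ℕ) * (n - j)) (mem_univ i),
    sum_congr rfl fun j hj => by rw [update_of_ne (ne_of_mem_erase hj)], update_self]
  ring

lemma exists_lowering {s I : K} (hc : I * (s - s⁻¹)⁻¹ ≠ 0) {r : Fin n → Fin 2} (hr : r ≠ 0) :
    ∃ (i : Fin n) (r' : Fin n → Fin 2), height r' < height r ∧
      SendsSingle (Eop s I i) r r' ∧ SendsSingle (Fop (K := K) i) r' r := by
  obtain ⟨i, hi⟩ := (Set.toFinite {j | r j ≠ 0}).exists_maximal (Function.ne_iff.mp hr)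
  have hri : r i = 1 := Fin.eq_one_of_ne_zero _ hi.prop
  have hright : ∀ j, i < j → r j = 0 := fun j hij => by_contra fun hj => hi.not_gt hj hij
  refine ⟨i, ?_⟩
  by_cases h : (i : ℕ) + 1 < n
  · let j : Fin n := ⟨i + 1, h⟩
    have hij : i ≠ j := Fin.ne_of_val_ne (by simp [j])
    have hrj : r j = 0 := hright j (Fin.lt_def.2 (by simp [j]))
    refine ⟨update (update r j 1) i 0, ?_, ?_, ?_⟩
    · have e1 := height_update_add r j 1
      have e2 := height_update_add (update r j 1) i 0
      rw [hrj] at e1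
      rw [update_of_ne hij, hri] at e2
      simp only [Fin.val_zero, Fin.val_one, zero_mul, one_mul, add_zero] at e1 e2
      have : (j : ℕ) = i + 1 := rfl
      omega
    · simp only [Eop, dif_pos h]
      exact (sendsSingle_ψop (by rwa [update_of_ne hij])).comp (sendsSingle_ψdop hrj)
    · simp only [Fop, dif_pos h]
      have hback : update (update (update (update r j 1) i 0) i 1) j 0 = r := by
        rw [update_idem, update_comm hij.symm, update_idem,
          update_eq_self_iff.2 (by rw [update_of_ne hij.symm, hrj]), update_eq_self_iff.2 hri.symm]
      have := (sendsSingle_ψop (K := K) (i := j) (by simp [update_of_ne hij.symm])).comp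
        (sendsSingle_ψdop (K := K) (update_self i 0 (update r j 1)))
      rwa [hback] at this
  · refine ⟨update r i 0, ?_, ?_, ?_⟩
    · have e := height_update_add r i 0
      rw [hri] at e
      simp at e
      omega
    · simp only [Eop, dif_neg h]
      exact (sendsSingle_ψop hri).smul hc
    · simp only [Fop, dif_neg h]
      have hback : update (update r i 0) i 1 = r := by
        rw [update_idem, update_eq_self_iff.2 hri.symm]
      have := sendsSingle_ψdop (K := K) (update_self i 0 r)
      rwa [hback] at this

lemma single_mem_iff_vacuum_mem {s I : K} (hc : I * (s - s⁻¹)⁻¹ ≠ 0)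
    {W : Submodule K (FockV K n)} (hE : ∀ i, ∀ f ∈ W, Eop s I i f ∈ W)
    (hF : ∀ i, ∀ f ∈ W, Fop i f ∈ W) (r : Fin n → Fin 2) :
    (Pi.single r 1 : FockV K n) ∈ W ↔ (Pi.single 0 1 : FockV K n) ∈ W := by
  induction hk : height r using Nat.strong_induction_on generalizing r with
  | _ k ih =>
    by_cases hr : r = 0
    · rw [hr]
    obtain ⟨i, r', hlt, hEr, hFr⟩ := exists_lowering hc hr
    rw [← ih _ (hk ▸ hlt) r' rfl]
    exact ⟨hEr.mem (hE i), hFr.mem (hF i)⟩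

theorem eq_top_of_single_mem {s I : K} (hc : I * (s - s⁻¹)⁻¹ ≠ 0)
    {W : Submodule K (FockV K n)} (hE : ∀ i, ∀ f ∈ W, Eop s I i f ∈ W)
    (hF : ∀ i, ∀ f ∈ W, Fop i f ∈ W) {r : Fin n → Fin 2}
    (hr : (Pi.single r 1 : FockV K n) ∈ W) : W = ⊤ := by
  have hall : ∀ r', (Pi.single r' 1 : FockV K n) ∈ W := fun r' =>
    (single_mem_iff_vacuum_mem hc hE hF r').2 ((single_mem_iff_vacuum_mem hc hE hF r).1 hr)
  refine eq_top_iff.2 ((Pi.basisFun K (Fin n → Fin 2)).span_eq.symm.trans_le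
    (Submodule.span_le.2 ?_))
  rintro _ ⟨r', rfl⟩
  rw [Pi.basisFun_apply]
  exact hall r'

end FockV

theorem stmt11_general {K : Type*} [Field K] (q s I : K) (hq0 : q ≠ 0) (hq1 : q ^ 2 ≠ 1)
    (hs : s ^ 2 = q) (hs0 : s ≠ 0) (hI : I ^ 2 = -1) (n : ℕ) :
    -- irreducibility
    (∀ W : Submodule K (FockV K n),
      (∀ (i : Fin n) (f : FockV K n), f ∈ W → Eop s I i f ∈ W) →
      (∀ (i : Fin n) (f : FockV K n), f ∈ W → Fop i f ∈ W) →
      (∀ (i : Fin n) (f : FockV K n), f ∈ W → Kop q s I i f ∈ W) →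
      (∀ (i : Fin n) (f : FockV K n), f ∈ W → Kinvop q s I i f ∈ W) →
      W ≠ ⊥ → W = ⊤) ∧
    -- dimension 2^n
    Module.finrank K (FockV K n) = 2 ^ n ∧
    -- `|0⟩` is a highest weight vector of weight `(1, …, 1, √-1 q^{1/2})`
    (∀ i : Fin n, Eop s I i (fockVac K n) = 0) ∧
    (∀ i : Fin n,
      Kop q s I i (fockVac K n) =
        (if (i : ℕ) + 1 < n then (1 : K) else I * s) • fockVac K n) := by
  have hq1' : q ≠ 1 := fun h => hq1 (by rw [h, one_pow])
  have hI0 : I ≠ 0 := by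
    rintro rfl
    norm_num at hI
  have hss : s - s⁻¹ ≠ 0 := by
    have : s * (s - s⁻¹) = q - 1 := by rw [mul_sub, mul_inv_cancel₀ hs0, ← hs, sq]
    exact fun h => hq1' (sub_eq_zero.1 (by rw [← this, h, mul_zero]))
  refine ⟨fun W hE hF hK _ hW => ?_, FockV.finrank_eq, FockV.Eop_fockVac s I,
    FockV.Kop_fockVac q s I⟩
  obtain ⟨r, hr⟩ := W.exists_single_mem_of_injective _
    (FockV.kWeight_injective hq0 hq1' (mul_ne_zero hI0 hs0))
    (fun i f hf => by rw [← FockV.Kop_eq_mul]; exact hK i f hf) hW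
  exact FockV.eq_top_of_single_mem (mul_ne_zero hI0 (inv_ne_zero hss)) hE hF hr

/-- the spinor representation `V_q(n)` of `U_q(osp(1|2n), Θ₁)` (the pullback
of the Fock space of `Cl_q(n)` along `π`) is irreducible, has dimension `2^n`, and the
vacuum `|0⟩` is a highest weight vector of weight `(1,…,1, √-1 q^{1/2})`:
`e_i |0⟩ = 0` for all `i`, `k_i |0⟩ = |0⟩` for `i < n` and `k_n |0⟩ = √-1 q^{1/2} |0⟩`. -/
theorem stmt11 {K : Type*} [Field K] (q s I : K) (hq0 : q ≠ 0) (hq1 : q ^ 2 ≠ 1)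
    (hs : s ^ 2 = q) (hs0 : s ≠ 0) (hI : I ^ 2 = -1) (n : ℕ) (hn : 1 ≤ n) :
    -- irreducibility
    (∀ W : Submodule K (FockV K n),
      (∀ (i : Fin n) (f : FockV K n), f ∈ W → Eop s I i f ∈ W) →
      (∀ (i : Fin n) (f : FockV K n), f ∈ W → Fop i f ∈ W) →
      (∀ (i : Fin n) (f : FockV K n), f ∈ W → Kop q s I i f ∈ W) →
      (∀ (i : Fin n) (f : FockV K n), f ∈ W → Kinvop q s I i f ∈ W) →
      W ≠ ⊥ → W = ⊤) ∧
    -- dimension 2^n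
    Module.finrank K (FockV K n) = 2 ^ n ∧
    -- `|0⟩` is a highest weight vector of weight `(1, …, 1, √-1 q^{1/2})`
    (∀ i : Fin n, Eop s I i (fockVac K n) = 0) ∧
    (∀ i : Fin n,
      Kop q s I i (fockVac K n) =
        (if (i : ℕ) + 1 < n then (1 : K) else I * s) • fockVac K n) :=
  stmt11_general q s I hq0 hq1 hs hs0 hI n
end
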